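/- arXiv:2208.13487 — 8 statements merged into one kernel-verified Lean document; each statement's English description precedes it below -/
import Mathlib

section
/- Let n ≥ 2 be an integer and let x_1, ..., x_{n-1} be integers with 0 ≤ x_i ≤ n for all i, satisfying x_i ≥ x_{i+1} for all i ∈ {1,...,n-2}. If ∑_{i=1}^{n-1} 2^{n-i-1} · x_i = 2^{n-1}·n − 2^n + 1, then x_i = n − i for all i ∈ {1,...,n-1}. -/
lemma geom2 (m : ℕ) : ∑ t ∈ Finset.range m, (2:ℤ)^t = 2^m - 1 := by
  induction m with
  | zero => simp
  | succ m ih => rw [Finset.sum_range_succ, ih]; ring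

lemma key : ∀ m : ℕ, 1 ≤ m → ∀ (u : ℕ → ℤ) (D : ℤ),
    (∀ t, t + 1 < m → u t ≤ u (t+1)) →
    (∀ t, t < m → 0 ≤ u t) →
    0 ≤ D →
    (∑ t ∈ Finset.range m, 2^t * u t = ((m:ℤ) - 1 - D) * 2^m + 1) →
    D = 0 ∧ ∀ t < m, u t = t + 1 := by
  intro m hm
  induction m, hm using Nat.le_induction with
  | base =>
    intro u D hmono hpos hD hsum
    simp [Finset.sum_range_one] at hsum
    have h0 := hpos 0 (by norm_num)
    have h1 : u 0 = 1 - 2*D := by linarith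
    constructor
    · omega
    · intro t ht
      interval_cases t
      simp; omega
  | succ m hm ih =>
    intro u D hmono hpos hD hsum
    push_cast at hsum
    rw [Finset.sum_range_succ'] at hsum
    have hK : ∑ t ∈ Finset.range m, (2:ℤ)^(t+1) * u (t+1)
        = 2 * ∑ t ∈ Finset.range m, (2:ℤ)^t * u (t+1) := by
      rw [Finset.mul_sum]
      exact Finset.sum_congr rfl (by intros; ring)
    rw [hK] at hsum
    set K := ∑ t ∈ Finset.range m, (2:ℤ)^t * u (t+1) with hKdef
    set a : ℤ := ((m:ℤ) - D) * 2^m - K with hadef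
    have h2pow : ((m:ℤ) + 1 - 1 - D) * 2^(m+1) = 2 * (((m:ℤ) - D) * 2^m) := by ring
    have ha : u 0 = 2*a + 1 := by
      rw [h2pow] at hsum
      simp at hsum
      rw [hadef]
      linarith
    have ha0 : 0 ≤ a := by have := hpos 0 (by omega); omega
    have hchain : ∀ t, t < m + 1 → u 0 ≤ u t := by
      intro t
      induction t with
      | zero => intro _; exact le_refl _
      | succ s ihs =>
        intro h
        exact le_trans (ihs (by omega)) (hmono s (by omega))
    set u' : ℕ → ℤ := fun t => u (t+1) - (a+1) with hu'
    have hmono' : ∀ t, t + 1 < m → u' t ≤ u' (t+1) := by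
      intro t ht
      simp only [hu']
      have := hmono (t+1) (by omega)
      linarith
    have hpos' : ∀ t, t < m → 0 ≤ u' t := by
      intro t ht
      have := hchain (t+1) (by omega)
      simp only [hu']
      omega
    have hsum' : ∑ t ∈ Finset.range m, 2^t * u' t = ((m:ℤ) - 1 - (D + a)) * 2^m + 1 := by
      have e1 : ∑ t ∈ Finset.range m, (2:ℤ)^t * u' t
          = ∑ t ∈ Finset.range m, ((2:ℤ)^t * u (t+1) - (2:ℤ)^t * (a+1)) :=
        Finset.sum_congr rfl (by intros; simp only [hu']; ring)
      rw [e1, Finset.sum_sub_distrib, ← Finset.sum_mul, geom2, ← hKdef]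
      have hK2 : K = ((m:ℤ) - D) * 2^m - a := by rw [hadef]; ring
      rw [hK2]; ring
    obtain ⟨hD', hall⟩ := ih u' (D + a) hmono' hpos' (by linarith) hsum'
    have hDa : D = 0 ∧ a = 0 := by constructor <;> omega
    obtain ⟨hD0, ha00⟩ := hDa
    refine ⟨hD0, ?_⟩
    intro t ht
    cases t with
    | zero => simp; omega
    | succ s =>
      have := hall s (by omega)
      simp only [hu'] at this
      push_cast
      omega

/-- Theorem about powers of two: the unique non-ascending solution of
`∑_{i=1}^{n-1} 2^{n-i-1} x_i = 2^{n-1} n − 2^n + 1` with `0 ≤ x_i ≤ n` is `x_i = n - i`. -/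
theorem stmt_0 (n : ℕ) (hn : 2 ≤ n) (x : ℕ → ℤ)
    (hx : ∀ i ∈ Finset.Icc 1 (n - 1), 0 ≤ x i ∧ x i ≤ (n : ℤ))
    (hmono : ∀ i ∈ Finset.Icc 1 (n - 2), x (i + 1) ≤ x i)
    (heq : ∑ i ∈ Finset.Icc 1 (n - 1), (2 : ℤ) ^ (n - i - 1) * x i
      = 2 ^ (n - 1) * n - 2 ^ n + 1) :
    ∀ i ∈ Finset.Icc 1 (n - 1), x i = (n : ℤ) - i := by
  set m := n - 1 with hmdef
  have hnm : n = m + 1 := by omega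
  have hm1 : 1 ≤ m := by omega
  set u : ℕ → ℤ := fun t => x (m - t) with hu
  -- rewrite heq as sum over range m of 2^j * u j
  have hre : ∑ i ∈ Finset.Icc 1 (n-1), (2 : ℤ) ^ (n - i - 1) * x i
      = ∑ t ∈ Finset.range m, (2:ℤ)^t * u t := by
    rw [show Finset.Icc 1 (n-1) = Finset.Ico 1 (m+1) by rw [Finset.Ico_add_one_right_eq_Icc]]
    rw [Finset.sum_Ico_eq_sum_range]
    rw [show m + 1 - 1 = m from rfl]
    rw [← Finset.sum_range_reflect]
    apply Finset.sum_congr rfl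
    intro j hj
    simp only [Finset.mem_range] at hj
    simp only [hu]
    have e1 : n - (1 + (m - 1 - j)) - 1 = j := by omega
    have e2 : 1 + (m - 1 - j) = m - j := by omega
    rw [e1, e2]
  have hval : (2:ℤ) ^ (n - 1) * n - 2 ^ n + 1 = ((m:ℤ) - 1 - 0) * 2^m + 1 := by
    rw [show n - 1 = m from rfl, hnm]
    push_cast
    ring
  have hsum : ∑ t ∈ Finset.range m, 2^t * u t = ((m:ℤ) - 1 - 0) * 2^m + 1 := by
    rw [← hre, heq, hval]
  have hmono' : ∀ t, t + 1 < m → u t ≤ u (t+1) := by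
    intro t ht
    simp only [hu]
    have e1 : m - t = (m - t - 1) + 1 := by omega
    have e2 : m - (t+1) = m - t - 1 := by omega
    rw [e1, e2]
    exact hmono (m - t - 1) (by simp [Finset.mem_Icc]; omega)
  have hpos' : ∀ t, t < m → 0 ≤ u t := by
    intro t ht
    exact (hx (m - t) (by simp [Finset.mem_Icc]; omega)).1
  obtain ⟨-, hall⟩ := key m hm1 u 0 hmono' hpos' le_rfl hsum
  intro i hi
  simp only [Finset.mem_Icc] at hi
  have := hall (m - i) (by omega)
  simp only [hu] at this
  rw [show m - (m - i) = i from by omega] at this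
  omega
end

section
/- Let n ≥ 2 and let x̄_0, ..., x̄_{n-2} be integers with 0 ≤ x̄_i ≤ n, satisfying x̄_i ≤ x̄_{i+1} for all i ∈ {0,...,n-3}. If ∑_{i=0}^{n-2} 2^i · x̄_i = 2^{n-1}·n − 2^n + 1, then x̄_i = i + 1 for all i ∈ {0,...,n-2}. -/
/-- Coins lemma: nonneg integer coefficients with `∑ c k * 2^k = 2^m - 1` need
coefficient sum at least `m`, and if it is at most `m` then all are `1`. -/
lemma coins_key : ∀ (m : ℕ) (c : ℕ → ℤ), (∀ k, k < m → 0 ≤ c k) →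
    (∑ k ∈ Finset.range m, c k * 2 ^ k = 2 ^ m - 1) →
    ((m : ℤ) ≤ ∑ k ∈ Finset.range m, c k ∧
      ((∑ k ∈ Finset.range m, c k) ≤ (m : ℤ) → ∀ k, k < m → c k = 1)) := by
  intro m
  induction m with
  | zero => intro c _ _; simp
  | succ m ih =>
    intro c hpos hw
    rw [Finset.sum_range_succ'] at hw
    have h2 : ∑ k ∈ Finset.range m, c (k + 1) * 2 ^ (k + 1)
        = 2 * ∑ k ∈ Finset.range m, c (k + 1) * 2 ^ k := by
      rw [Finset.mul_sum]; apply Finset.sum_congr rfl; intro k _; ring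
    set S : ℤ := ∑ k ∈ Finset.range m, c (k + 1) * 2 ^ k with hS
    set q : ℤ := 2 ^ m - 1 - S with hq
    have hc0 : c 0 = 2 * q + 1 := by
      rw [h2] at hw
      have hp : (2:ℤ) ^ (m+1) = 2 * 2 ^ m := by ring
      rw [hp] at hw
      simp only [pow_zero, mul_one] at hw
      rw [hq]; linarith
    have hq0 : 0 ≤ q := by have := hpos 0 (by omega); omega
    rcases Nat.eq_zero_or_pos m with hm | hm
    · subst hm
      have hc0' : c 0 = 1 := by
        simp [hS] at hq; omega
      constructor
      · simp [Finset.sum_range_one, hc0']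
      · intro _ k hk
        interval_cases k
        exact hc0'
    · -- m ≥ 1
      set c' : ℕ → ℤ := fun k => c (k+1) + if k = 0 then q else 0 with hc'
      have hpos' : ∀ k, k < m → 0 ≤ c' k := by
        intro k hk
        have := hpos (k+1) (by omega)
        simp only [hc']
        split <;> omega
      have hw' : ∑ k ∈ Finset.range m, c' k * 2 ^ k = 2 ^ m - 1 := by
        have hsplit : ∀ k, c' k * 2 ^ k
            = c (k+1) * 2 ^ k + (if k = 0 then q * 2 ^ k else 0) := by
          intro k; by_cases h : k = 0 <;> simp [hc', h]
        calc ∑ k ∈ Finset.range m, c' k * 2 ^ k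
            = ∑ k ∈ Finset.range m,
                (c (k+1) * 2 ^ k + (if k = 0 then q * 2 ^ k else 0)) :=
              Finset.sum_congr rfl (fun k _ => hsplit k)
          _ = S + ∑ k ∈ Finset.range m, (if k = 0 then q * 2 ^ k else 0) := by
              rw [Finset.sum_add_distrib]
          _ = S + q := by
              rw [Finset.sum_ite_eq' (Finset.range m) 0 (fun k => q * 2 ^ k)]
              simp [Finset.mem_range, hm]
          _ = 2 ^ m - 1 := by rw [hq]; ring
      obtain ⟨ih1, ih2⟩ := ih c' hpos' hw'
      have hsum' : ∑ k ∈ Finset.range m, c' k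
          = (∑ k ∈ Finset.range m, c (k+1)) + q := by
        simp only [hc']
        rw [Finset.sum_add_distrib]
        congr 1
        rw [Finset.sum_ite_eq' (Finset.range m) 0 (fun _ => q)]
        simp [Finset.mem_range, hm]
      rw [hsum'] at ih1 ih2
      have htot : ∑ k ∈ Finset.range (m+1), c k
          = (∑ k ∈ Finset.range m, c (k+1)) + c 0 := Finset.sum_range_succ' c m
      constructor
      · rw [htot]; push_cast; omega
      · intro hle k hk
        rw [htot] at hle
        have hq0' : q = 0 := by push_cast at hle ih1; omega
        have hforall : ∀ k, k < m → c' k = 1 := ih2 (by push_cast at hle ⊢; omega)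
        match k with
        | 0 => omega
        | (j+1) =>
          have := hforall j (by omega)
          simp only [hc'] at this
          split at this <;> omega

/-- Abel-type telescoping identity. -/
lemma wsum (X : ℕ → ℤ) : ∀ t, ∑ k ∈ Finset.range t, (X (k+1) - X k) * 2 ^ k
    = X t * 2 ^ t - X 0 - ∑ k ∈ Finset.range t, X (k+1) * 2 ^ k := by
  intro t
  induction t with
  | zero => simp
  | succ t ih => rw [Finset.sum_range_succ, Finset.sum_range_succ, ih]; ring

/-- Statement (S2): the unique non-descending solution of
`∑_{i=0}^{n-2} 2^i x̄_i = 2^{n-1} n − 2^n + 1` with `0 ≤ x̄_i ≤ n` is `x̄_i = i + 1`. -/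
theorem stmt_1 (n : ℕ) (hn : 2 ≤ n) (x : ℕ → ℤ)
    (hx : ∀ i ∈ Finset.range (n - 1), 0 ≤ x i ∧ x i ≤ (n : ℤ))
    (hmono : ∀ i, i + 1 ≤ n - 2 → x i ≤ x (i + 1))
    (heq : ∑ i ∈ Finset.range (n - 1), (2 : ℤ) ^ i * x i
      = 2 ^ (n - 1) * n - 2 ^ n + 1) :
    ∀ i ∈ Finset.range (n - 1), x i = (i : ℤ) + 1 := by
  obtain ⟨m, rfl⟩ : ∃ m, n = m + 2 := ⟨n - 2, by omega⟩
  have hn1 : m + 2 - 1 = m + 1 := rfl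
  have hn2 : m + 2 - 2 = m := rfl
  rw [hn1] at hx heq ⊢
  rw [hn2] at hmono
  set M := m + 1 with hM
  set X : ℕ → ℤ := fun k => if k = 0 then 0 else if k ≤ M then x (k-1) else ((m:ℤ)+2) with hX
  have hXval : ∀ k, k < M → X (k+1) = x k := by
    intro k hk
    simp only [hX]
    rw [if_neg (by omega), if_pos (by omega)]
    congr 1
  have hXtop : X (M+1) = (m:ℤ) + 2 := by
    simp only [hX]; rw [if_neg (by omega), if_neg (by omega)]
  have hX0 : X 0 = 0 := by simp [hX]
  set c : ℕ → ℤ := fun k => X (k+1) - X k with hc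
  have h_nonneg : ∀ k, k < M + 1 → 0 ≤ c k := by
    intro k hk
    simp only [hc]
    match k, hk with
    | 0, _ =>
      rw [hXval 0 (by omega), hX0]
      have := (hx 0 (by simp [Finset.mem_range]; omega)).1
      omega
    | (j+1), hk =>
      by_cases hjM : j + 1 < M
      · rw [hXval (j+1) hjM, hXval j (by omega)]
        have := hmono j (by omega)
        omega
      · have hjeq : j + 1 = M := by omega
        have hXM : X M = x m := by rw [hM]; exact hXval m (by omega)
        rw [hjeq, hXtop, hXM]
        have := (hx m (by simp [Finset.mem_range]; omega)).2
        push_cast at this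
        omega
  have h_count : ∑ k ∈ Finset.range (M+1), c k = (m:ℤ) + 2 := by
    simp only [hc]
    rw [Finset.sum_range_sub X (M+1), hXtop, hX0]
    ring
  have h_weight : ∑ k ∈ Finset.range (M+1), c k * 2 ^ k = 2 ^ (M+1) - 1 := by
    simp only [hc]
    rw [wsum X (M+1), hXtop, hX0]
    rw [Finset.sum_range_succ, hXtop]
    have hinner : ∑ k ∈ Finset.range M, X (k+1) * 2 ^ k
        = ∑ k ∈ Finset.range M, 2 ^ k * x k := by
      apply Finset.sum_congr rfl
      intro k hk
      rw [hXval k (Finset.mem_range.mp hk)]; ring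
    rw [hinner, heq]
    have hpow : (2:ℤ) ^ (m+2) = 2 ^ (M+1) := by rw [hM]
    have hpow2 : (2:ℤ) ^ (M+1) = 2 * 2 ^ M := by ring
    push_cast
    rw [hpow, hpow2]
    ring
  have hall : ∀ k, k < M + 1 → c k = 1 := by
    refine (coins_key (M+1) c h_nonneg h_weight).2 ?_
    rw [h_count]; push_cast; omega
  have hXk : ∀ k, k ≤ M + 1 → X k = (k : ℤ) := by
    intro k
    induction k with
    | zero => intro _; simpa using hX0
    | succ j ihj =>
      intro hj
      have hcj := hall j (by omega)
      simp only [hc] at hcj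
      have := ihj (by omega)
      push_cast
      omega
  intro i hi
  have hiM : i < M := Finset.mem_range.mp hi
  have := hXk (i+1) (by omega)
  rw [hXval i hiM] at this
  push_cast at this
  omega
end

section
/- Let n ≥ 2 and let y_0, ..., y_{n-2} be nonnegative integers satisfying 2^{n-1}·(∑_{i=0}^{n-2} y_i) − ∑_{i=0}^{n-2} 2^i · y_i = 2^{n-1}·n − 2^n + 1 and ∑_{i=0}^{n-2} y_i ≤ n. Then ∑_{i=0}^{n-2} y_i = n − 1. -/
open Finset

lemma aux_mincount : ∀ (k : ℕ) (y : ℕ → ℕ),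
    ∑ i ∈ range k, 2 ^ i * y i = 2 ^ (k + 1) - 1 → k + 2 ≤ ∑ i ∈ range k, y i := by
  intro k
  induction k with
  | zero => intro y h; simp at h
  | succ k ih =>
    intro y h
    rw [Finset.sum_range_succ'] at h
    have h2 : ∑ i ∈ range k, 2 ^ (i + 1) * y (i + 1)
        = 2 * ∑ i ∈ range k, 2 ^ i * y (i + 1) := by
      rw [Finset.mul_sum]
      exact Finset.sum_congr rfl (fun i _ => by ring)
    rw [h2] at h
    have hpow : 2 ^ (k + 2) = 2 * 2 ^ (k + 1) := by ring
    have hpos : 1 ≤ 2 ^ (k + 1) := Nat.one_le_two_pow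
    set a := y 0 / 2 with ha
    have hy0 : y 0 = 2 * a + 1 := by omega
    have hA : a + ∑ i ∈ range k, 2 ^ i * y (i + 1) = 2 ^ (k + 1) - 1 := by omega
    rcases Nat.eq_zero_or_pos k with hk | hk
    · subst hk
      simp at hA ⊢
      omega
    · -- k ≥ 1
      set z : ℕ → ℕ := fun i => y (i + 1) + if i = 0 then a else 0 with hz
      have hz1 : ∑ i ∈ range k, 2 ^ i * z i = 2 ^ (k + 1) - 1 := by
        simp only [hz, Nat.mul_add, mul_ite, mul_zero]
        rw [Finset.sum_add_distrib, Finset.sum_ite_eq' (range k) 0 (fun i => 2 ^ i * a)]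
        simp [Finset.mem_range.mpr hk]
        omega
      have hz2 : ∑ i ∈ range k, z i = a + ∑ i ∈ range k, y (i + 1) := by
        simp only [hz]
        rw [Finset.sum_add_distrib, Finset.sum_ite_eq' (range k) 0 (fun _ => a)]
        simp [Finset.mem_range.mpr hk]
        omega
      have := ih z hz1
      rw [hz2] at this
      rw [Finset.sum_range_succ']
      omega

/-- Lemma (erstesHilfslemma): the equation forces `∑ y_i = n − 1`. -/
theorem stmt_3 (n : ℕ) (hn : 2 ≤ n) (y : ℕ → ℕ)
    (hsum : ∑ i ∈ Finset.range (n - 1), y i ≤ n)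
    (heq : (2 : ℤ) ^ (n - 1) * (∑ i ∈ Finset.range (n - 1), (y i : ℤ))
        - ∑ i ∈ Finset.range (n - 1), (2 : ℤ) ^ i * (y i : ℤ)
      = 2 ^ (n - 1) * n - 2 ^ n + 1) :
    ∑ i ∈ Finset.range (n - 1), y i = n - 1 := by
  set S := ∑ i ∈ Finset.range (n - 1), y i with hSdef
  set T := ∑ i ∈ Finset.range (n - 1), 2 ^ i * y i with hTdef
  have hScast : ((S : ℕ) : ℤ) = ∑ i ∈ Finset.range (n - 1), (y i : ℤ) := by
    push_cast [hSdef]; ring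
  have hTcast : ((T : ℕ) : ℤ) = ∑ i ∈ Finset.range (n - 1), (2 : ℤ) ^ i * (y i : ℤ) := by
    push_cast [hTdef]; ring
  have hn1 : n - 1 + 1 = n := by omega
  have hpow : (2 : ℤ) ^ n = 2 ^ (n - 1) * 2 := by rw [← pow_succ, hn1]
  rw [← hScast, ← hTcast, hpow] at heq
  have hT : (T : ℤ) = 2 ^ (n - 1) * ((S : ℤ) - n + 2) - 1 := by ring_nf; linarith [heq]
  have hppos : (0 : ℤ) < 2 ^ (n - 1) := by positivity
  have hTnn : (0 : ℤ) ≤ (T : ℤ) := Int.ofNat_nonneg T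
  -- lower bound : S ≥ n - 1
  have hlow : (n : ℤ) - 1 ≤ (S : ℤ) := by
    by_contra hc
    push_neg at hc
    have h1 : (S : ℤ) - n + 2 ≤ 0 := by omega
    nlinarith
  -- S ≠ n
  have hne : S ≠ n := by
    intro hSn
    have hTeq : (T : ℤ) = 2 ^ (n - 1) * 2 - 1 := by rw [hT, hSn]; ring
    have h2n : ((2 ^ n - 1 : ℕ) : ℤ) = 2 ^ (n - 1) * 2 - 1 := by
      have : (1:ℕ) ≤ 2 ^ n := Nat.one_le_two_pow
      push_cast [this]
      rw [hpow]
    have hTn : T = 2 ^ n - 1 := by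
      have := hTeq.trans h2n.symm
      exact_mod_cast this
    have := aux_mincount (n - 1) y (by rw [← hTdef, hTn, hn1])
    omega
  have hS' : n - 1 ≤ S := by omega
  omega
end

section
/- Let n ≥ 1 and let y_0, ..., y_{n-2} be nonnegative integers with ∑_{i=0}^{n-2} y_i = n and ∑_{i=0}^{n-2} 2^i · y_i = 2^n − 1. Then no such assignment exists; i.e., there are no nonnegative integers y_0,...,y_{n-2} with total sum exactly n satisfying ∑_{i=0}^{n-2} 2^i y_i = 2^n − 1. -/
lemma stmt_5_aux : ∀ n : ℕ, 1 ≤ n → ∀ y : ℕ → ℕ,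
    (∑ i ∈ Finset.range (n - 1), 2 ^ i * y i = 2 ^ n - 1) →
    n + 1 ≤ ∑ i ∈ Finset.range (n - 1), y i := by
  intro n
  induction n using Nat.strong_induction_on with
  | _ n ih =>
    intro hn y heq
    match n, hn with
    | 1, _ => simp at heq
    | 2, _ =>
      simp [Finset.sum_range_one] at heq ⊢
      omega
    | (m+2)+1, _ => ?_
    set m' := m + 2 with hm'
    -- n = m' + 1, m' ≥ 2
    have hsplit : ∑ i ∈ Finset.range m', 2 ^ i * y i
        = (∑ i ∈ Finset.range (m' - 1), 2 ^ (i+1) * y (i+1)) + 2 ^ 0 * y 0 := by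
      have : m' = (m' - 1) + 1 := by omega
      rw [this, Finset.sum_range_succ']
      simp
    simp only [Nat.add_sub_cancel] at heq
    rw [hsplit] at heq
    have hA : ∀ i, 2 ^ (i+1) * y (i+1) = 2 * (2 ^ i * y (i+1)) := by
      intro i; ring
    simp only [hA, ← Finset.mul_sum, pow_zero, one_mul] at heq
    set A := ∑ i ∈ Finset.range (m' - 1), 2 ^ i * y (i+1) with hAdef
    -- y 0 is odd
    have hpow : 2 ^ (m'+1) = 2 * 2 ^ m' := by ring
    have hpm : 1 ≤ 2 ^ m' := Nat.one_le_two_pow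
    have hodd : y 0 % 2 = 1 := by omega
    set k := (y 0 - 1) / 2 with hkdef
    have hy0 : y 0 = 2 * k + 1 := by omega
    have hkA : k + A = 2 ^ m' - 1 := by omega
    set y' : ℕ → ℕ := fun i => y (i+1) + if i = 0 then k else 0 with hy'
    have hsum' : ∑ i ∈ Finset.range (m' - 1), 2 ^ i * y' i = 2 ^ m' - 1 := by
      simp only [hy', mul_add, Finset.sum_add_distrib]
      have h1 : ∑ i ∈ Finset.range (m' - 1), 2 ^ i * (if i = 0 then k else 0) = k := by
        rw [Finset.sum_eq_single 0]
        · simp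
        · intro b _ hb; simp [hb]
        · intro h; simp only [Finset.mem_range] at h; omega
      rw [h1]
      omega
    have := ih m' (by omega) (by omega) y' hsum'
    have hsy : ∑ i ∈ Finset.range (m' - 1), y' i
        = (∑ i ∈ Finset.range (m' - 1), y (i+1)) + k := by
      simp only [hy', Finset.sum_add_distrib]
      congr 1
      rw [Finset.sum_eq_single 0]
      · simp
      · intro b _ hb; simp [hb]
      · intro h; simp only [Finset.mem_range] at h; omega
    have hsplit2 : ∑ i ∈ Finset.range (m' + 1 - 1), y i
        = (∑ i ∈ Finset.range (m' - 1), y (i+1)) + y 0 := by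
      simp only [Nat.add_sub_cancel]
      have : m' = (m' - 1) + 1 := by omega
      rw [this, Finset.sum_range_succ']
      simp
    omega

/-- There are no nonnegative integers `y_0,…,y_{n-2}` with total sum exactly `n`
satisfying `∑_{i=0}^{n-2} 2^i y_i = 2^n − 1`. -/
theorem stmt_5 (n : ℕ) (hn : 1 ≤ n) (y : ℕ → ℕ)
    (hsum : ∑ i ∈ Finset.range (n - 1), y i = n)
    (heq : ∑ i ∈ Finset.range (n - 1), 2 ^ i * y i = 2 ^ n - 1) :
    False := by
  have := stmt_5_aux n hn y heq
  omega
end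

section
/- Let s̃_1, ..., s̃_n be positive integers with ∑_{i=1}^n s̃_i = 2w̃. Define 2n positive integers by s_{2i-1} = s̃_i + 1 and s_{2i} = 1 for i ∈ {1,...,n}, grouped into pairs S_i = {s_{2i-1}, s_{2i}}. Then there exists a subset S̃ of {1,...,n} with ∑_{i ∈ S̃} s̃_i = w̃ if and only if there exists a partition of the 2n integers into two sets S^1, S^2 such that each pair S_i contributes exactly one element to each of S^1 and S^2, and the elements of S^1 sum to w̃ + n and the elements of S^2 sum to w̃ + n. -/
lemma pair_sum_aux (n : ℕ) (f : ℕ → ℕ) (T : Finset ℕ) (hT : T ⊆ Finset.Icc 1 (2*n)) :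
    ∑ j ∈ T, f j =
      ∑ i ∈ Finset.Icc 1 n,
        ((if 2*i-1 ∈ T then f (2*i-1) else 0) + (if 2*i ∈ T then f (2*i) else 0)) := by
  have himg : Finset.Icc 1 (2*n) =
      ((Finset.Icc 1 n).image (fun i => 2*i-1)) ∪ ((Finset.Icc 1 n).image (fun i => 2*i)) := by
    ext j
    simp only [Finset.mem_Icc, Finset.mem_union, Finset.mem_image]
    constructor
    · intro h
      rcases Nat.even_or_odd j with ⟨k, hk⟩ | ⟨k, hk⟩
      · right; exact ⟨k, by omega, by omega⟩
      · left; exact ⟨k+1, by omega, by omega⟩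
    · rintro (⟨i, hi, rfl⟩ | ⟨i, hi, rfl⟩) <;> omega
  have hdisj : Disjoint ((Finset.Icc 1 n).image (fun i => 2*i-1))
      ((Finset.Icc 1 n).image (fun i => 2*i)) := by
    rw [Finset.disjoint_left]
    intro a ha hb
    simp only [Finset.mem_image, Finset.mem_Icc] at ha hb
    obtain ⟨i, hi, rfl⟩ := ha
    obtain ⟨k, hk, hk2⟩ := hb
    omega
  have h1 : ∑ j ∈ T, f j = ∑ j ∈ Finset.Icc 1 (2*n), if j ∈ T then f j else 0 := by
    rw [Finset.sum_ite_mem, Finset.inter_eq_right.mpr hT]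
  rw [h1, himg, Finset.sum_union hdisj, Finset.sum_image (by intro x hx y hy h; simp only [Finset.coe_Icc, Set.mem_Icc] at hx hy h; omega),
    Finset.sum_image (by intro x hx y hy h; beta_reduce at h; omega), ← Finset.sum_add_distrib]

/-- Reduction from Partition to One-out-of-a-pair-partition: with `s_{2i-1} = s̃_i + 1` and
`s_{2i} = 1`, the original instance has a solution summing to `w̃` iff the pairs can be
separated into two sets each summing to `w̃ + n`. -/
theorem stmt_7 (n w : ℕ) (hn : 1 ≤ n) (st : ℕ → ℕ)
    (hpos : ∀ i ∈ Finset.Icc 1 n, 0 < st i)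
    (hsum : ∑ i ∈ Finset.Icc 1 n, st i = 2 * w)
    (s : ℕ → ℕ)
    (hs : ∀ i ∈ Finset.Icc 1 n, s (2 * i - 1) = st i + 1 ∧ s (2 * i) = 1) :
    (∃ S ⊆ Finset.Icc 1 n, ∑ i ∈ S, st i = w) ↔
      (∃ S1 S2 : Finset ℕ,
        S1 ∪ S2 = Finset.Icc 1 (2 * n) ∧ Disjoint S1 S2 ∧
        (∀ i ∈ Finset.Icc 1 n,
          (2 * i - 1 ∈ S1 ∧ 2 * i ∈ S2) ∨ (2 * i - 1 ∈ S2 ∧ 2 * i ∈ S1)) ∧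
        ∑ j ∈ S1, s j = w + n ∧ ∑ j ∈ S2, s j = w + n) := by
  constructor
  · rintro ⟨S, hS, hSsum⟩
    set P : ℕ → Prop := fun j => if j % 2 = 1 then (j+1)/2 ∈ S else j/2 ∉ S with hP
    set T1 := (Finset.Icc 1 (2*n)).filter (fun j => P j) with hT1
    set T2 := (Finset.Icc 1 (2*n)).filter (fun j => ¬ P j) with hT2
    have ho : ∀ i ∈ Finset.Icc 1 n, (P (2*i-1) ↔ i ∈ S) := by
      intro i hi
      simp only [Finset.mem_Icc] at hi
      have h1 : (2*i-1) % 2 = 1 := by omega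
      have h2 : (2*i-1+1)/2 = i := by omega
      simp [hP, h1, h2]
    have he : ∀ i ∈ Finset.Icc 1 n, (P (2*i) ↔ i ∉ S) := by
      intro i hi
      simp only [Finset.mem_Icc] at hi
      have h1 : ¬ (2*i) % 2 = 1 := by omega
      have h2 : (2*i)/2 = i := by omega
      simp only [hP]
      rw [if_neg h1, h2]
    have hmo : ∀ i ∈ Finset.Icc 1 n, 2*i-1 ∈ Finset.Icc 1 (2*n) := by
      intro i hi; simp only [Finset.mem_Icc] at *; omega
    have hme : ∀ i ∈ Finset.Icc 1 n, 2*i ∈ Finset.Icc 1 (2*n) := by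
      intro i hi; simp only [Finset.mem_Icc] at *; omega
    have hm1o : ∀ i ∈ Finset.Icc 1 n, (2*i-1 ∈ T1 ↔ i ∈ S) := by
      intro i hi
      simp only [hT1, Finset.mem_filter, hmo i hi, true_and]; exact ho i hi
    have hm1e : ∀ i ∈ Finset.Icc 1 n, (2*i ∈ T1 ↔ i ∉ S) := by
      intro i hi
      simp only [hT1, Finset.mem_filter, hme i hi, true_and]; exact he i hi
    have hm2o : ∀ i ∈ Finset.Icc 1 n, (2*i-1 ∈ T2 ↔ i ∉ S) := by
      intro i hi
      simp only [hT2, Finset.mem_filter, hmo i hi, true_and]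
      rw [ho i hi]
    have hm2e : ∀ i ∈ Finset.Icc 1 n, (2*i ∈ T2 ↔ i ∈ S) := by
      intro i hi
      simp only [hT2, Finset.mem_filter, hme i hi, true_and]
      rw [he i hi]; tauto
    have hsum_mem : ∑ i ∈ Finset.Icc 1 n, (if i ∈ S then st i else 0) = w := by
      rw [Finset.sum_ite_mem, Finset.inter_eq_right.mpr hS, hSsum]
    have hsum_split : ∑ i ∈ Finset.Icc 1 n,
        ((if i ∈ S then st i else 0) + (if i ∈ S then 0 else st i)) = 2 * w := by
      rw [← hsum]
      refine Finset.sum_congr rfl fun i hi => ?_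
      by_cases h : i ∈ S <;> simp [h]
    have hcard : ∑ _i ∈ Finset.Icc 1 n, 1 = n := by
      rw [Finset.sum_const, smul_eq_mul, mul_one, Nat.card_Icc]; omega
    refine ⟨T1, T2, Finset.filter_union_filter_not_eq _ _,
      Finset.disjoint_filter_filter_not _ _ _, ?_, ?_, ?_⟩
    · intro i hi
      by_cases hiS : i ∈ S
      · left; exact ⟨(hm1o i hi).mpr hiS, (hm2e i hi).mpr hiS⟩
      · right; exact ⟨(hm2o i hi).mpr hiS, (hm1e i hi).mpr hiS⟩
    · rw [pair_sum_aux n s _ (Finset.filter_subset _ _)]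
      have step : ∀ i ∈ Finset.Icc 1 n,
          ((if 2*i-1 ∈ T1 then s (2*i-1) else 0) + (if 2*i ∈ T1 then s (2*i) else 0))
          = (if i ∈ S then st i else 0) + 1 := by
        intro i hi
        obtain ⟨h1, h2⟩ := hs i hi
        by_cases hiS : i ∈ S <;>
          simp [hm1o i hi, hm1e i hi, hiS, h1, h2]
      rw [Finset.sum_congr rfl step, Finset.sum_add_distrib, hsum_mem, hcard]
    · rw [pair_sum_aux n s _ (Finset.filter_subset _ _)]
      have step : ∀ i ∈ Finset.Icc 1 n,
          ((if 2*i-1 ∈ T2 then s (2*i-1) else 0) + (if 2*i ∈ T2 then s (2*i) else 0))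
          = (if i ∈ S then 0 else st i) + 1 := by
        intro i hi
        obtain ⟨h1, h2⟩ := hs i hi
        by_cases hiS : i ∈ S <;>
          simp [hm2o i hi, hm2e i hi, hiS, h1, h2]
      rw [Finset.sum_congr rfl step, Finset.sum_add_distrib, hcard]
      rw [Finset.sum_add_distrib, hsum_mem] at hsum_split
      omega
  · rintro ⟨S1, S2, hunion, hdisj, hpair, hsum1, hsum2⟩
    refine ⟨(Finset.Icc 1 n).filter (fun i => 2*i-1 ∈ S1), Finset.filter_subset _ _, ?_⟩
    have hS1sub : S1 ⊆ Finset.Icc 1 (2*n) := hunion ▸ Finset.subset_union_left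
    have key : ∑ j ∈ S1, s j = (∑ i ∈ (Finset.Icc 1 n).filter (fun i => 2*i-1 ∈ S1), st i) + n := by
      rw [pair_sum_aux n s _ hS1sub]
      rw [Finset.sum_filter]
      have : ∀ i ∈ Finset.Icc 1 n,
          ((if 2*i-1 ∈ S1 then s (2*i-1) else 0) + (if 2*i ∈ S1 then s (2*i) else 0))
          = (if 2*i-1 ∈ S1 then st i else 0) + 1 := by
        intro i hi
        obtain ⟨h1, h2⟩ := hs i hi
        rcases hpair i hi with ⟨ha, hb⟩ | ⟨ha, hb⟩
        · have hnb : 2*i ∉ S1 := fun h => (Finset.disjoint_left.mp hdisj h) hb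
          simp [ha, hnb, h1]
        · have hna : 2*i-1 ∉ S1 := fun h => (Finset.disjoint_left.mp hdisj h) ha
          simp [hna, hb, h2]
      rw [Finset.sum_congr rfl this, Finset.sum_add_distrib]
      simp
    rw [key] at hsum1
    omega
end

section
/- Series-parallel digraphs are defined recursively: a single arc (o,q) is series-parallel with origin o and target q; the series composition of two SP digraphs (identifying the target of the first with the origin of the second) is SP; and the parallel composition (identifying the two origins and the two targets) is SP. Claim: for every SP digraph G and any two vertices v, w ∈ V(G) such that there exists a directed path from v to w, the subgraph G_{vw} induced by all vertices x such that there exist directed paths from v to x and from x to w is itself a series-parallel digraph with origin v and target w. -/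
/-- A digraph: a set of vertices together with a set of arcs (ordered pairs). -/
structure SDigraph (V : Type*) where
  verts : Set V
  arcs : Set (V × V)

/-- Adjacency relation of a digraph. -/
def SDigraph.Arc {V : Type*} (G : SDigraph V) (v w : V) : Prop := (v, w) ∈ G.arcs

/-- Reachability by a directed path (possibly trivial). -/
def SDigraph.Reach {V : Type*} (G : SDigraph V) : V → V → Prop :=
  Relation.ReflTransGen G.Arc

/-- Series-parallel digraphs, defined recursively: a single arc is SP; the series
composition (gluing the target of the first with the origin of the second) is SP;
the parallel composition (gluing origins and targets) is SP. -/
inductive IsSP {V : Type*} : SDigraph V → V → V → Prop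
  | arc (o q : V) (h : o ≠ q) : IsSP ⟨{o, q}, {(o, q)}⟩ o q
  | series {G₁ G₂ : SDigraph V} {o z q : V}
      (h₁ : IsSP G₁ o z) (h₂ : IsSP G₂ z q)
      (hmeet : G₁.verts ∩ G₂.verts = {z}) :
      IsSP ⟨G₁.verts ∪ G₂.verts, G₁.arcs ∪ G₂.arcs⟩ o q
  | parallel {G₁ G₂ : SDigraph V} {o q : V}
      (h₁ : IsSP G₁ o q) (h₂ : IsSP G₂ o q)
      (hmeet : G₁.verts ∩ G₂.verts = {o, q}) :
      IsSP ⟨G₁.verts ∪ G₂.verts, G₁.arcs ∪ G₂.arcs⟩ o q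

/-- The subgraph of `G` spanned by two vertices `v, w`: it is induced by all vertices
reachable from `v` and from which `w` is reachable. -/
def SDigraph.spanned {V : Type*} (G : SDigraph V) (v w : V) : SDigraph V :=
  ⟨{x | G.Reach v x ∧ G.Reach x w},
   {a | a ∈ G.arcs ∧ (G.Reach v a.1 ∧ G.Reach a.1 w) ∧ (G.Reach v a.2 ∧ G.Reach a.2 w)}⟩

open Relation

namespace SPAux
variable {V : Type*}

/-- basic well-formedness facts about an SP digraph -/
structure Facts (G : SDigraph V) (o q : V) : Prop where
  ho : o ∈ G.verts
  hq : q ∈ G.verts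
  hne : o ≠ q
  harc : ∀ a ∈ G.arcs, a.1 ∈ G.verts ∧ a.2 ∈ G.verts
  hro : ∀ x ∈ G.verts, G.Reach o x
  hrq : ∀ x ∈ G.verts, G.Reach x q
  hacyc : ∀ x, ¬ Relation.TransGen G.Arc x x

theorem sd_ext {A B : SDigraph V} (h1 : A.verts = B.verts) (h2 : A.arcs = B.arcs) : A = B := by
  cases A; cases B; simp_all

theorem Facts.arc_src {G : SDigraph V} {o q x y : V} (F : Facts G o q) (h : G.Arc x y) :
    x ∈ G.verts := (F.harc (x, y) h).1

theorem Facts.arc_tgt {G : SDigraph V} {o q x y : V} (F : Facts G o q) (h : G.Arc x y) :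
    y ∈ G.verts := (F.harc (x, y) h).2

theorem Facts.no_in {G : SDigraph V} {o q x : V} (F : Facts G o q) (h : G.Arc x o) : False :=
  F.hacyc o (Relation.TransGen.tail' (F.hro x (F.arc_src h)) h)

theorem Facts.no_out {G : SDigraph V} {o q x : V} (F : Facts G o q) (h : G.Arc q x) : False :=
  F.hacyc q (Relation.TransGen.head' h (F.hrq x (F.arc_tgt h)))

theorem Facts.antisymm {G : SDigraph V} {o q x y : V} (F : Facts G o q)
    (hxy : G.Reach x y) (hyx : G.Reach y x) : x = y := by
  by_contra hne
  rcases (reflTransGen_iff_eq_or_transGen).1 hxy with h | h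
  · exact hne h.symm
  · exact F.hacyc y (Relation.TransGen.trans_right hyx h)

theorem Facts.reach_mem_right {G : SDigraph V} {o q v x : V} (F : Facts G o q)
    (hv : v ∈ G.verts) (h : G.Reach v x) : x ∈ G.verts := by
  rcases Relation.ReflTransGen.cases_tail h with h | ⟨c, _, hc⟩
  · exact h ▸ hv
  · exact F.arc_tgt hc

theorem Facts.transGen_src {G : SDigraph V} {o q v w : V} (F : Facts G o q)
    (h : TransGen G.Arc v w) : v ∈ G.verts := by
  obtain ⟨m, hm, -⟩ := (TransGen.head'_iff).1 h
  exact F.arc_src hm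

theorem Facts.transGen_tgt {G : SDigraph V} {o q v w : V} (F : Facts G o q)
    (h : TransGen G.Arc v w) : w ∈ G.verts := by
  obtain ⟨m, -, hm⟩ := (TransGen.tail'_iff).1 h
  exact F.arc_tgt hm

/-- the union (used for both series and parallel composition) -/
def U (G₁ G₂ : SDigraph V) : SDigraph V := ⟨G₁.verts ∪ G₂.verts, G₁.arcs ∪ G₂.arcs⟩

theorem arc_U_iff {G₁ G₂ : SDigraph V} {x y : V} :
    (U G₁ G₂).Arc x y ↔ G₁.Arc x y ∨ G₂.Arc x y := Iff.rfl

theorem reach_U_left {G₁ G₂ : SDigraph V} {x y : V} (h : G₁.Reach x y) :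
    (U G₁ G₂).Reach x y := ReflTransGen.mono (fun _ _ h => Or.inl h) _ _ h

theorem reach_U_right {G₁ G₂ : SDigraph V} {x y : V} (h : G₂.Reach x y) :
    (U G₁ G₂).Reach x y := ReflTransGen.mono (fun _ _ h => Or.inr h) _ _ h


section Series
variable {G₁ G₂ : SDigraph V} {o z q : V}
variable (F₁ : Facts G₁ o z) (F₂ : Facts G₂ z q) (hmeet : G₁.verts ∩ G₂.verts = {z})

theorem eq_z_of_mem_both (hmeet : G₁.verts ∩ G₂.verts = {z}) {x : V}
    (h1 : x ∈ G₁.verts) (h2 : x ∈ G₂.verts) : x = z := by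
  have : x ∈ G₁.verts ∩ G₂.verts := ⟨h1, h2⟩
  rwa [hmeet] at this

include F₁ F₂ hmeet

/-- In a series composition, walks starting in `G₂ \ {z}` stay in `G₂ \ {z}`. -/
theorem S1 : ∀ {x y : V}, (U G₁ G₂).Reach x y → x ∈ G₂.verts → x ≠ z →
    y ∈ G₂.verts ∧ y ≠ z ∧ G₂.Reach x y := by
  intro x y h
  induction h using Relation.ReflTransGen.head_induction_on with
  | refl => exact fun hx hxz => ⟨hx, hxz, Relation.ReflTransGen.refl⟩
  | head h' h ih =>
    rename_i a c
    intro ha haz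
    rcases h' with h1 | h2
    · exact absurd (eq_z_of_mem_both hmeet (F₁.arc_src h1) ha) haz
    · have hc : c ∈ G₂.verts := F₂.arc_tgt h2
      have hcz : c ≠ z := by
        rintro rfl
        exact F₂.hacyc c (Relation.TransGen.tail' (F₂.hro a ha) h2)
      obtain ⟨hy, hyz, hr⟩ := ih hc hcz
      exact ⟨hy, hyz, Relation.ReflTransGen.head h2 hr⟩

/-- In a series composition, walks starting in `G₁` decompose. -/
theorem S2 : ∀ {x y : V}, (U G₁ G₂).Reach x y → x ∈ G₁.verts →
    (y ∈ G₁.verts ∧ G₁.Reach x y) ∨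
    (y ∈ G₂.verts ∧ y ≠ z ∧ G₁.Reach x z ∧ G₂.Reach z y) := by
  intro x y h
  induction h using Relation.ReflTransGen.head_induction_on with
  | refl => exact fun hx => Or.inl ⟨hx, Relation.ReflTransGen.refl⟩
  | head h' h ih =>
    rename_i a c
    intro ha
    rcases h' with h1 | h2
    · have hc : c ∈ G₁.verts := F₁.arc_tgt h1
      rcases ih hc with ⟨hy, hr⟩ | ⟨hy, hyz, hr1, hr2⟩
      · exact Or.inl ⟨hy, Relation.ReflTransGen.head h1 hr⟩
      · exact Or.inr ⟨hy, hyz, Relation.ReflTransGen.head h1 hr1, hr2⟩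
    · have haz : a = z := eq_z_of_mem_both hmeet ha (F₂.arc_src h2)
      rw [haz] at h2
      have hc : c ∈ G₂.verts := F₂.arc_tgt h2
      have hcz : c ≠ z := by
        intro hcz0
        rw [hcz0] at h2
        exact F₂.hacyc z (Relation.TransGen.single h2)
      obtain ⟨hy, hyz, hr⟩ := S1 F₁ F₂ hmeet h hc hcz
      exact Or.inr ⟨hy, hyz, by rw [haz]; exact Relation.ReflTransGen.refl, Relation.ReflTransGen.head h2 hr⟩

theorem series_acyclic : ∀ x, ¬ Relation.TransGen (U G₁ G₂).Arc x x := by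
  intro x hx
  obtain ⟨m, hm, hmx⟩ := (Relation.TransGen.head'_iff).1 hx
  rcases hm with h1 | h2
  · have hm1 : m ∈ G₁.verts := F₁.arc_tgt h1
    rcases S2 F₁ F₂ hmeet hmx hm1 with ⟨_, hr⟩ | ⟨hx2, hxz, _, _⟩
    · exact F₁.hacyc x (Relation.TransGen.head' h1 hr)
    · exact hxz (eq_z_of_mem_both hmeet (F₁.arc_src h1) hx2)
  · have hm2 : m ∈ G₂.verts := F₂.arc_tgt h2
    have hmz : m ≠ z := by
      rintro rfl
      exact F₂.hacyc m (Relation.TransGen.tail' (F₂.hro x (F₂.arc_src h2)) h2)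
    obtain ⟨hx2, hxz, hr⟩ := S1 F₁ F₂ hmeet hmx hm2 hmz
    exact F₂.hacyc x (Relation.TransGen.head' h2 hr)

theorem facts_series : Facts (U G₁ G₂) o q := by
  refine ⟨Or.inl F₁.ho, Or.inr F₂.hq, ?_, ?_, ?_, ?_, series_acyclic F₁ F₂ hmeet⟩
  · rintro rfl
    exact F₂.hne (eq_z_of_mem_both hmeet F₁.ho F₂.hq).symm
  · rintro a (h | h)
    · exact ⟨Or.inl (F₁.harc a h).1, Or.inl (F₁.harc a h).2⟩
    · exact ⟨Or.inr (F₂.harc a h).1, Or.inr (F₂.harc a h).2⟩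
  · rintro x (h | h)
    · exact reach_U_left (F₁.hro x h)
    · exact (reach_U_left (F₁.hro z F₁.hq)).trans (reach_U_right (F₂.hro x h))
  · rintro x (h | h)
    · exact (reach_U_left (F₁.hrq x h)).trans (reach_U_right (F₂.hrq z F₂.ho))
    · exact reach_U_right (F₂.hrq x h)

end Series


section Parallel
variable {G₁ G₂ : SDigraph V} {o q : V}
variable (F₁ : Facts G₁ o q) (F₂ : Facts G₂ o q) (hmeet : G₁.verts ∩ G₂.verts = {o, q})

theorem mem_oq_of_mem_both (hmeet : G₁.verts ∩ G₂.verts = {o, q}) {x : V}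
    (h1 : x ∈ G₁.verts) (h2 : x ∈ G₂.verts) : x = o ∨ x = q := by
  have : x ∈ G₁.verts ∩ G₂.verts := ⟨h1, h2⟩
  rwa [hmeet] at this

include F₁ F₂ hmeet

/-- In a parallel composition, any nontrivial walk lies entirely in one side. -/
theorem P1 : ∀ {x y : V}, Relation.TransGen (U G₁ G₂).Arc x y →
    Relation.TransGen G₁.Arc x y ∨ Relation.TransGen G₂.Arc x y := by
  intro x y h
  induction h using Relation.TransGen.head_induction_on with
  | single h' =>
    rcases h' with h1 | h2
    · exact Or.inl (Relation.TransGen.single h1)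
    · exact Or.inr (Relation.TransGen.single h2)
  | head h' h ihh =>
    rename_i a c
    rcases h' with h1 | h2
    · rcases ihh with tg | tg
      · exact Or.inl (Relation.TransGen.head h1 tg)
      · -- mixed: c is target of a G₁-arc and source of a G₂-arc
        have hc1 : c ∈ G₁.verts := F₁.arc_tgt h1
        have hc2 : c ∈ G₂.verts := F₂.transGen_src tg
        rcases mem_oq_of_mem_both hmeet hc1 hc2 with rfl | rfl
        · exact absurd h1 F₁.no_in
        · obtain ⟨m, hm, -⟩ := (Relation.TransGen.head'_iff).1 tg
          exact absurd hm F₂.no_out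
    · rcases ihh with tg | tg
      · have hc2 : c ∈ G₂.verts := F₂.arc_tgt h2
        have hc1 : c ∈ G₁.verts := F₁.transGen_src tg
        rcases mem_oq_of_mem_both hmeet hc1 hc2 with rfl | rfl
        · exact absurd h2 F₂.no_in
        · obtain ⟨m, hm, -⟩ := (Relation.TransGen.head'_iff).1 tg
          exact absurd hm F₁.no_out
      · exact Or.inr (Relation.TransGen.head h2 tg)

theorem parallel_acyclic : ∀ x, ¬ Relation.TransGen (U G₁ G₂).Arc x x := by
  intro x hx
  rcases P1 F₁ F₂ hmeet hx with h | h
  · exact F₁.hacyc x h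
  · exact F₂.hacyc x h

theorem facts_parallel : Facts (U G₁ G₂) o q := by
  refine ⟨Or.inl F₁.ho, Or.inl F₁.hq, F₁.hne, ?_, ?_, ?_, parallel_acyclic F₁ F₂ hmeet⟩
  · rintro a (h | h)
    · exact ⟨Or.inl (F₁.harc a h).1, Or.inl (F₁.harc a h).2⟩
    · exact ⟨Or.inr (F₂.harc a h).1, Or.inr (F₂.harc a h).2⟩
  · rintro x (h | h)
    · exact reach_U_left (F₁.hro x h)
    · exact reach_U_right (F₂.hro x h)
  · rintro x (h | h)
    · exact reach_U_left (F₁.hrq x h)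
    · exact reach_U_right (F₂.hrq x h)

end Parallel

/-- every SP digraph satisfies the basic facts -/
theorem facts_of_isSP {G : SDigraph V} {o q : V} (h : IsSP G o q) : Facts G o q := by
  induction h with
  | arc o q hne =>
    have harc : ∀ a ∈ ({(o, q)} : Set (V × V)), a.1 ∈ ({o, q} : Set V) ∧ a.2 ∈ ({o, q} : Set V) := by
      rintro a rfl
      exact ⟨Or.inl rfl, Or.inr rfl⟩
    have hArc : SDigraph.Arc ⟨{o, q}, {(o, q)}⟩ o q := rfl
    refine ⟨Or.inl rfl, Or.inr rfl, hne, harc, ?_, ?_, ?_⟩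
    · rintro x (rfl | rfl)
      · exact Relation.ReflTransGen.refl
      · exact Relation.ReflTransGen.single hArc
    · rintro x (rfl | rfl)
      · exact Relation.ReflTransGen.single hArc
      · exact Relation.ReflTransGen.refl
    · intro x hx
      obtain ⟨m, hm, hmx⟩ := (Relation.TransGen.head'_iff).1 hx
      have hm' : (x, m) = (o, q) := hm
      have hx0 : x = o := congrArg Prod.fst hm'
      have hm0 : m = q := congrArg Prod.snd hm'
      rw [hx0, hm0] at hmx
      rcases Relation.ReflTransGen.cases_tail hmx with heq | ⟨c, _, hc⟩
      · exact hne heq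
      · exact hne (congrArg Prod.snd (hc : (c, o) = (o, q)))
  | series h₁ h₂ hmeet ih₁ ih₂ => exact facts_series ih₁ ih₂ hmeet
  | parallel h₁ h₂ hmeet ih₁ ih₂ => exact facts_parallel ih₁ ih₂ hmeet


/-- the subgraph spanned by the origin and target is the whole graph -/
theorem spanned_oq {G : SDigraph V} {o q : V} (F : Facts G o q) : G.spanned o q = G := by
  apply sd_ext
  · ext x
    constructor
    · rintro ⟨h1, -⟩
      exact F.reach_mem_right F.ho h1
    · intro hx
      exact ⟨F.hro x hx, F.hrq x hx⟩
  · ext a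
    constructor
    · rintro ⟨ha, -⟩
      exact ha
    · intro ha
      obtain ⟨e1, e2⟩ := F.harc a ha
      exact ⟨ha, ⟨F.hro _ e1, F.hrq _ e1⟩, ⟨F.hro _ e2, F.hrq _ e2⟩⟩

/-- the main claim, in the parallel case, when the path lies in the first component -/
theorem parallel_main {G₁ G₂ : SDigraph V} {o q v w : V}
    (h₁ : IsSP G₁ o q) (h₂ : IsSP G₂ o q) (hmeet : G₁.verts ∩ G₂.verts = {o, q})
    (ih₁ : ∀ v w, Relation.TransGen G₁.Arc v w → IsSP (G₁.spanned v w) v w)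
    (tg : Relation.TransGen G₁.Arc v w) :
    IsSP ((U G₁ G₂).spanned v w) v w := by
  have F₁ := facts_of_isSP h₁
  have F₂ := facts_of_isSP h₂
  have hv1 : v ∈ G₁.verts := F₁.transGen_src tg
  have hw1 : w ∈ G₁.verts := F₁.transGen_tgt tg
  by_cases hboth : v = o ∧ w = q
  · obtain ⟨rfl, rfl⟩ := hboth
    rw [spanned_oq (facts_parallel F₁ F₂ hmeet)]
    exact IsSP.parallel h₁ h₂ hmeet
  · have hcl : ∀ x y : V, (U G₁ G₂).Reach x y →
        x = y ∨ Relation.TransGen G₁.Arc x y ∨ Relation.TransGen G₂.Arc x y := by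
      intro x y h
      rcases (reflTransGen_iff_eq_or_transGen).1 h with h | h
      · exact Or.inl h.symm
      · exact Or.inr (P1 F₁ F₂ hmeet h)
    have hv_o : ∀ x, Relation.TransGen G₂.Arc v x → v = o := by
      intro x h
      rcases mem_oq_of_mem_both hmeet hv1 (F₂.transGen_src h) with h' | h'
      · exact h'
      · rw [h'] at h
        obtain ⟨m, hm, -⟩ := (Relation.TransGen.head'_iff).1 h
        exact absurd hm F₂.no_out
    have hw_q : ∀ x, Relation.TransGen G₂.Arc x w → w = q := by
      intro x h
      rcases mem_oq_of_mem_both hmeet hw1 (F₂.transGen_tgt h) with h' | h'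
      · rw [h'] at h
        obtain ⟨m, -, hm⟩ := (Relation.TransGen.tail'_iff).1 h
        exact absurd hm F₂.no_in
      · exact h'
    have hmix21 : ∀ x, Relation.TransGen G₂.Arc v x → Relation.TransGen G₁.Arc x w → False := by
      intro x k2 k1
      rcases mem_oq_of_mem_both hmeet (F₁.transGen_src k1) (F₂.transGen_tgt k2) with h' | h'
      · rw [h'] at k2
        obtain ⟨m, -, hm⟩ := (Relation.TransGen.tail'_iff).1 k2
        exact F₂.no_in hm
      · rw [h'] at k1
        obtain ⟨m, hm, -⟩ := (Relation.TransGen.head'_iff).1 k1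
        exact F₁.no_out hm
    have hmix12 : ∀ x, Relation.TransGen G₁.Arc v x → Relation.TransGen G₂.Arc x w → False := by
      intro x k1 k2
      rcases mem_oq_of_mem_both hmeet (F₁.transGen_tgt k1) (F₂.transGen_src k2) with h' | h'
      · rw [h'] at k1
        obtain ⟨m, -, hm⟩ := (Relation.TransGen.tail'_iff).1 k1
        exact F₁.no_in hm
      · rw [h'] at k2
        obtain ⟨m, hm, -⟩ := (Relation.TransGen.head'_iff).1 k2
        exact F₂.no_out hm
    have key : ∀ x, (U G₁ G₂).Reach v x → (U G₁ G₂).Reach x w →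
        G₁.Reach v x ∧ G₁.Reach x w := by
      intro x hvx hxw
      rcases hcl v x hvx with h0 | hvx1 | hvx2
      · rw [← h0]
        exact ⟨Relation.ReflTransGen.refl, tg.to_reflTransGen⟩
      · rcases hcl x w hxw with h0 | hxw1 | hxw2
        · rw [h0]
          exact ⟨tg.to_reflTransGen, Relation.ReflTransGen.refl⟩
        · exact ⟨hvx1.to_reflTransGen, hxw1.to_reflTransGen⟩
        · exact (hmix12 x hvx1 hxw2).elim
      · rcases hcl x w hxw with h0 | hxw1 | hxw2
        · rw [h0] at hvx2
          exact absurd ⟨hv_o w hvx2, hw_q v hvx2⟩ hboth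
        · exact (hmix21 x hvx2 hxw1).elim
        · exact absurd ⟨hv_o x hvx2, hw_q x hxw2⟩ hboth
    have heq : (U G₁ G₂).spanned v w = G₁.spanned v w := by
      apply sd_ext
      · ext x
        constructor
        · rintro ⟨hvx, hxw⟩
          exact key x hvx hxw
        · rintro ⟨r1, r2⟩
          exact ⟨reach_U_left r1, reach_U_left r2⟩
      · ext ⟨a1, a2⟩
        constructor
        · rintro ⟨ha, ⟨c1a, c1b⟩, ⟨c2a, c2b⟩⟩
          have k1 := key a1 c1a c1b
          have k2 := key a2 c2a c2b
          rcases ha with h1 | h2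
          · exact ⟨h1, k1, k2⟩
          · have ha2 : G₂.Arc a1 a2 := h2
            have e1 : a1 ∈ G₁.verts := F₁.reach_mem_right hv1 k1.1
            have e2 : a2 ∈ G₁.verts := F₁.reach_mem_right hv1 k2.1
            rcases mem_oq_of_mem_both hmeet e1 (F₂.arc_src ha2) with rfl | rfl
            · rcases mem_oq_of_mem_both hmeet e2 (F₂.arc_tgt ha2) with rfl | rfl
              · exact (F₂.no_in ha2).elim
              · refine (hboth ⟨?_, ?_⟩).elim
                · rcases (reflTransGen_iff_eq_or_transGen).1 k1.1 with h | h
                  · exact h.symm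
                  · obtain ⟨m, -, hm⟩ := (Relation.TransGen.tail'_iff).1 h
                    exact (F₁.no_in hm).elim
                · rcases (reflTransGen_iff_eq_or_transGen).1 k2.2 with h | h
                  · exact h
                  · obtain ⟨m, hm, -⟩ := (Relation.TransGen.head'_iff).1 h
                    exact (F₁.no_out hm).elim
            · exact (F₂.no_out ha2).elim
        · rintro ⟨h1, ⟨d1a, d1b⟩, ⟨d2a, d2b⟩⟩
          exact ⟨Or.inl h1, ⟨reach_U_left d1a, reach_U_left d1b⟩,
            ⟨reach_U_left d2a, reach_U_left d2b⟩⟩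
    rw [heq]
    exact ih₁ v w tg


end SPAux

open SPAux

/-- In a series-parallel digraph, the subgraph spanned by two vertices `v, w` joined
by a directed path is itself series-parallel with origin `v` and target `w`. -/
theorem stmt_13 {V : Type*} (G : SDigraph V) (o q v w : V)
    (hG : IsSP G o q) (hpath : Relation.TransGen G.Arc v w) :
    IsSP (G.spanned v w) v w := by
  revert v w
  induction hG with
  | arc o q hne =>
    intro v w hpath
    obtain ⟨m, hm, hmw⟩ := (Relation.TransGen.head'_iff).1 hpath
    have hm' : (v, m) = (o, q) := hm
    have hv0 : v = o := congrArg Prod.fst hm'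
    have hm0 : m = q := congrArg Prod.snd hm'
    subst hv0
    subst hm0
    have hw0 : w = m := by
      rcases Relation.ReflTransGen.cases_tail hmw with h | ⟨c, _, hc⟩
      · exact h
      · exact congrArg Prod.snd (hc : (c, w) = (v, m))
    subst hw0
    rw [spanned_oq (facts_of_isSP (IsSP.arc v w hne))]
    exact IsSP.arc v w hne
  | @series G₁ G₂ o z q h₁ h₂ hmeet ih₁ ih₂ =>
    intro v w hpath
    have F₁ := facts_of_isSP h₁
    have F₂ := facts_of_isSP h₂
    have FU : Facts (U G₁ G₂) o q := facts_series F₁ F₂ hmeet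
    have hpath' : Relation.TransGen (U G₁ G₂).Arc v w := hpath
    have hrvw : (U G₁ G₂).Reach v w := hpath'.to_reflTransGen
    have hv : v ∈ (U G₁ G₂).verts := FU.transGen_src hpath'
    have hw : w ∈ (U G₁ G₂).verts := FU.transGen_tgt hpath'
    show IsSP ((U G₁ G₂).spanned v w) v w
    by_cases hb : v ∈ G₂.verts ∧ w ∈ G₂.verts
    · -- case (b) : both ends in G₂
      obtain ⟨hv2, hw2⟩ := hb
      have tg2 : Relation.TransGen G₂.Arc v w := by
        obtain ⟨m, hm, hmw⟩ := (Relation.TransGen.head'_iff).1 hpath'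
        rcases hm with h1 | h2
        · have hvz : v = z := eq_z_of_mem_both hmeet (F₁.arc_src h1) hv2
          rw [hvz] at h1
          have hm1 : m ∈ G₁.verts := F₁.arc_tgt h1
          rcases S2 F₁ F₂ hmeet hmw hm1 with ⟨hw1, hr⟩ | ⟨-, -, hr, -⟩
          · have hwz : w = z := eq_z_of_mem_both hmeet hw1 hw2
            rw [hwz] at hr
            exact (F₁.hacyc z (Relation.TransGen.head' h1 hr)).elim
          · exact (F₁.hacyc z (Relation.TransGen.head' h1 hr)).elim
        · have hm2 : m ∈ G₂.verts := F₂.arc_tgt h2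
          have hmz : m ≠ z := by
            intro h0
            rw [h0] at h2
            exact F₂.hacyc z (Relation.TransGen.tail' (F₂.hro v hv2) h2)
          obtain ⟨-, -, hr⟩ := S1 F₁ F₂ hmeet hmw hm2 hmz
          exact Relation.TransGen.head' h2 hr
      have hrvw2 : G₂.Reach v w := tg2.to_reflTransGen
      have key : ∀ x, (U G₁ G₂).Reach v x → (U G₁ G₂).Reach x w →
          G₂.Reach v x ∧ G₂.Reach x w := by
        intro x hvx hxw
        by_cases hvz : v = z
        · rw [hvz] at hvx
          rcases S2 F₁ F₂ hmeet hvx F₁.hq with ⟨hx1, hr⟩ | ⟨hx2, hxz, -, hr⟩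
          · have hxz : z = x := F₁.antisymm hr (F₁.hrq x hx1)
            rw [← hxz, hvz]
            exact ⟨Relation.ReflTransGen.refl, by rw [← hvz]; exact hrvw2⟩
          · refine ⟨by rw [hvz]; exact hr, ?_⟩
            obtain ⟨-, -, hr2⟩ := S1 F₁ F₂ hmeet hxw hx2 hxz
            exact hr2
        · obtain ⟨hx2, hxz, hr⟩ := S1 F₁ F₂ hmeet hvx hv2 hvz
          obtain ⟨-, -, hr2⟩ := S1 F₁ F₂ hmeet hxw hx2 hxz
          exact ⟨hr, hr2⟩
      have heq : (U G₁ G₂).spanned v w = G₂.spanned v w := by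
        apply sd_ext
        · ext x
          constructor
          · rintro ⟨hvx, hxw⟩
            exact key x hvx hxw
          · rintro ⟨r1, r2⟩
            exact ⟨reach_U_right r1, reach_U_right r2⟩
        · ext ⟨a1, a2⟩
          constructor
          · rintro ⟨ha, ⟨c1a, c1b⟩, ⟨c2a, c2b⟩⟩
            have k1 := key a1 c1a c1b
            have k2 := key a2 c2a c2b
            rcases ha with h1 | h2
            · have ha1 : G₁.Arc a1 a2 := h1
              have e1 : a1 ∈ G₂.verts := F₂.reach_mem_right hv2 k1.1
              have e2 : a2 ∈ G₂.verts := F₂.reach_mem_right hv2 k2.1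
              have hz1 : a1 = z := eq_z_of_mem_both hmeet (F₁.arc_src ha1) e1
              have hz2 : a2 = z := eq_z_of_mem_both hmeet (F₁.arc_tgt ha1) e2
              rw [hz1, hz2] at ha1
              exact (F₁.hacyc z (Relation.TransGen.single ha1)).elim
            · exact ⟨h2, k1, k2⟩
          · rintro ⟨h2, ⟨d1a, d1b⟩, ⟨d2a, d2b⟩⟩
            exact ⟨Or.inr h2, ⟨reach_U_right d1a, reach_U_right d1b⟩,
              ⟨reach_U_right d2a, reach_U_right d2b⟩⟩
      rw [heq]
      exact ih₂ v w tg2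
    · by_cases hA : v ∈ G₁.verts ∧ w ∈ G₁.verts
      · -- case (a) : both ends in G₁
        obtain ⟨hv1, hw1⟩ := hA
        have tg1 : Relation.TransGen G₁.Arc v w := by
          obtain ⟨m, hm, hmw⟩ := (Relation.TransGen.head'_iff).1 hpath'
          rcases hm with h1 | h2
          · have hm1 : m ∈ G₁.verts := F₁.arc_tgt h1
            rcases S2 F₁ F₂ hmeet hmw hm1 with ⟨-, hr⟩ | ⟨hw2, hwz, -, -⟩
            · exact Relation.TransGen.head' h1 hr
            · exact (hwz (eq_z_of_mem_both hmeet hw1 hw2)).elim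
          · have hm2 : m ∈ G₂.verts := F₂.arc_tgt h2
            have hmz : m ≠ z := by
              intro h0
              rw [h0] at h2
              exact F₂.hacyc z (Relation.TransGen.tail' (F₂.hro v (F₂.arc_src h2)) h2)
            obtain ⟨hw2, hwz, -⟩ := S1 F₁ F₂ hmeet hmw hm2 hmz
            exact (hwz (eq_z_of_mem_both hmeet hw1 hw2)).elim
        have key : ∀ x, (U G₁ G₂).Reach v x → (U G₁ G₂).Reach x w →
            G₁.Reach v x ∧ G₁.Reach x w := by
          intro x hvx hxw
          rcases S2 F₁ F₂ hmeet hvx hv1 with ⟨hx1, hr⟩ | ⟨hx2, hxz, -, -⟩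
          · rcases S2 F₁ F₂ hmeet hxw hx1 with ⟨-, hr2⟩ | ⟨hw2, hwz, -, -⟩
            · exact ⟨hr, hr2⟩
            · exact (hwz (eq_z_of_mem_both hmeet hw1 hw2)).elim
          · obtain ⟨hw2, hwz, -⟩ := S1 F₁ F₂ hmeet hxw hx2 hxz
            exact (hwz (eq_z_of_mem_both hmeet hw1 hw2)).elim
        have heq : (U G₁ G₂).spanned v w = G₁.spanned v w := by
          apply sd_ext
          · ext x
            constructor
            · rintro ⟨hvx, hxw⟩
              exact key x hvx hxw
            · rintro ⟨r1, r2⟩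
              exact ⟨reach_U_left r1, reach_U_left r2⟩
          · ext ⟨a1, a2⟩
            constructor
            · rintro ⟨ha, ⟨c1a, c1b⟩, ⟨c2a, c2b⟩⟩
              have k1 := key a1 c1a c1b
              have k2 := key a2 c2a c2b
              rcases ha with h1 | h2
              · exact ⟨h1, k1, k2⟩
              · have ha2 : G₂.Arc a1 a2 := h2
                have e1 : a1 ∈ G₁.verts := F₁.reach_mem_right hv1 k1.1
                have e2 : a2 ∈ G₁.verts := F₁.reach_mem_right hv1 k2.1
                have hz1 : a1 = z := eq_z_of_mem_both hmeet e1 (F₂.arc_src ha2)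
                have hz2 : a2 = z := eq_z_of_mem_both hmeet e2 (F₂.arc_tgt ha2)
                rw [hz1, hz2] at ha2
                exact (F₂.hacyc z (Relation.TransGen.single ha2)).elim
            · rintro ⟨h1, ⟨d1a, d1b⟩, ⟨d2a, d2b⟩⟩
              exact ⟨Or.inl h1, ⟨reach_U_left d1a, reach_U_left d1b⟩,
                ⟨reach_U_left d2a, reach_U_left d2b⟩⟩
        rw [heq]
        exact ih₁ v w tg1
      · -- case (c) : v strictly in G₁, w strictly in G₂
        have hv1 : v ∈ G₁.verts := by
          rcases hv with h | h
          · exact h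
          · by_contra hnv1
            have hvz : v ≠ z := fun h0 => hnv1 (h0 ▸ F₁.hq)
            obtain ⟨hw2, -, -⟩ := S1 F₁ F₂ hmeet hrvw h hvz
            exact hb ⟨h, hw2⟩
        have hw2 : w ∈ G₂.verts := by
          rcases hw with h | h
          · exact absurd ⟨hv1, h⟩ hA
          · exact h
        have hvz : v ≠ z := fun h0 => hb ⟨h0 ▸ F₂.ho, hw2⟩
        have hwz : w ≠ z := fun h0 => hA ⟨hv1, h0 ▸ F₁.hq⟩
        rcases S2 F₁ F₂ hmeet hrvw hv1 with ⟨hw1, -⟩ | ⟨-, -, r1, r2⟩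
        · exact (hA ⟨hv1, hw1⟩).elim
        · have tg1 : Relation.TransGen G₁.Arc v z := by
            rcases (reflTransGen_iff_eq_or_transGen).1 r1 with h | h
            · exact (hvz h.symm).elim
            · exact h
          have tg2 : Relation.TransGen G₂.Arc z w := by
            rcases (reflTransGen_iff_eq_or_transGen).1 r2 with h | h
            · exact (hwz h).elim
            · exact h
          have SP1 := ih₁ v z tg1
          have SP2 := ih₂ z w tg2
          have hsub1 : (G₁.spanned v z).verts ⊆ G₁.verts :=
            fun x hx => F₁.reach_mem_right hv1 hx.1
          have hsub2 : (G₂.spanned z w).verts ⊆ G₂.verts :=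
            fun x hx => F₂.reach_mem_right F₂.ho hx.1
          have key1 : ∀ x, x ∈ G₁.verts → (U G₁ G₂).Reach v x → (U G₁ G₂).Reach x w →
              G₁.Reach v x ∧ G₁.Reach x z := by
            intro x hx1 hvx hxw
            rcases S2 F₁ F₂ hmeet hvx hv1 with ⟨-, hr⟩ | ⟨hx2, hxz, -, -⟩
            · rcases S2 F₁ F₂ hmeet hxw hx1 with ⟨hw1, -⟩ | ⟨-, -, hr2, -⟩
              · exact (hA ⟨hv1, hw1⟩).elim
              · exact ⟨hr, hr2⟩
            · exact (hxz (eq_z_of_mem_both hmeet hx1 hx2)).elim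
          have key2 : ∀ x, x ∈ G₂.verts → (U G₁ G₂).Reach v x → (U G₁ G₂).Reach x w →
              G₂.Reach z x ∧ G₂.Reach x w := by
            intro x hx2 hvx hxw
            by_cases hxz : x = z
            · refine ⟨?_, ?_⟩ <;> rw [hxz]
              · exact Relation.ReflTransGen.refl
              · exact r2
            · rcases S2 F₁ F₂ hmeet hvx hv1 with ⟨hx1, -⟩ | ⟨-, -, -, hr⟩
              · exact (hxz (eq_z_of_mem_both hmeet hx1 hx2)).elim
              · obtain ⟨-, -, hr2⟩ := S1 F₁ F₂ hmeet hxw hx2 hxz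
                exact ⟨hr, hr2⟩
          have hmeet' : (G₁.spanned v z).verts ∩ (G₂.spanned z w).verts = {z} := by
            ext x
            constructor
            · rintro ⟨hx1, hx2⟩
              exact eq_z_of_mem_both hmeet (hsub1 hx1) (hsub2 hx2)
            · rintro rfl
              exact ⟨⟨r1, Relation.ReflTransGen.refl⟩, ⟨Relation.ReflTransGen.refl, r2⟩⟩
          have heq : (U G₁ G₂).spanned v w = U (G₁.spanned v z) (G₂.spanned z w) := by
            apply sd_ext
            · ext x
              constructor
              · rintro ⟨hvx, hxw⟩
                have hxU : x ∈ (U G₁ G₂).verts := FU.reach_mem_right (Or.inl hv1) hvx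
                rcases hxU with h | h
                · exact Or.inl (key1 x h hvx hxw)
                · exact Or.inr (key2 x h hvx hxw)
              · rintro (⟨d1, d2⟩ | ⟨d1, d2⟩)
                · exact ⟨reach_U_left d1, (reach_U_left d2).trans (reach_U_right r2)⟩
                · exact ⟨(reach_U_left r1).trans (reach_U_right d1), reach_U_right d2⟩
            · ext ⟨a1, a2⟩
              constructor
              · rintro ⟨ha, ⟨c1a, c1b⟩, ⟨c2a, c2b⟩⟩
                rcases ha with h1 | h2
                · have ha1 : G₁.Arc a1 a2 := h1
                  exact Or.inl ⟨h1, key1 a1 (F₁.arc_src ha1) c1a c1b,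
                    key1 a2 (F₁.arc_tgt ha1) c2a c2b⟩
                · have ha2 : G₂.Arc a1 a2 := h2
                  exact Or.inr ⟨h2, key2 a1 (F₂.arc_src ha2) c1a c1b,
                    key2 a2 (F₂.arc_tgt ha2) c2a c2b⟩
              · rintro (⟨h1, ⟨d1a, d1b⟩, ⟨d2a, d2b⟩⟩ | ⟨h2, ⟨d1a, d1b⟩, ⟨d2a, d2b⟩⟩)
                · exact ⟨Or.inl h1,
                    ⟨reach_U_left d1a, (reach_U_left d1b).trans (reach_U_right r2)⟩,
                    ⟨reach_U_left d2a, (reach_U_left d2b).trans (reach_U_right r2)⟩⟩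
                · exact ⟨Or.inr h2,
                    ⟨(reach_U_left r1).trans (reach_U_right d1a), reach_U_right d1b⟩,
                    ⟨(reach_U_left r1).trans (reach_U_right d2a), reach_U_right d2b⟩⟩
          rw [heq]
          exact IsSP.series SP1 SP2 hmeet'
  | @parallel G₁ G₂ o q h₁ h₂ hmeet ih₁ ih₂ =>
    intro v w hpath
    have F₁ := facts_of_isSP h₁
    have F₂ := facts_of_isSP h₂
    have hpath' : Relation.TransGen (U G₁ G₂).Arc v w := hpath
    show IsSP ((U G₁ G₂).spanned v w) v w
    rcases P1 F₁ F₂ hmeet hpath' with tg | tg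
    · exact parallel_main h₁ h₂ hmeet ih₁ tg
    · have hcomm : U G₂ G₁ = U G₁ G₂ := sd_ext (Set.union_comm _ _) (Set.union_comm _ _)
      have hmeet' : G₂.verts ∩ G₁.verts = {o, q} := by rw [Set.inter_comm]; exact hmeet
      have hres := parallel_main h₂ h₁ hmeet' ih₂ tg
      rwa [hcomm] at hres
end

section
/- Let G be a pearl digraph with vertices v_1, ..., v_n arranged on a path, where each consecutive pair (v_i, v_{i+1}) is joined by at most one fixed arc a^fix_i and at most one free arc a^free_i (at least one exists). Given scenario balances b^λ : V → ℤ with ∑_v b^λ(v) = 0 for each scenario λ, define the state σ^λ_{v_i} = ∑_{j=1}^{i} b^λ(v_j). Then a feasible robust flow (one integral b^λ-flow per scenario, with equal flow on each fixed arc across scenarios) exists only if σ^λ_{v_i} ≥ 0 for all i and λ, and additionally σ^λ_{v_i} = min_μ σ^μ_{v_i} for all λ whenever the multi-arc between v_i and v_{i+1} consists of a fixed arc only. -/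
lemma telescope_aux (f : ℕ → ℤ) (h0 : f 0 = 0) :
    ∀ i, ∑ j ∈ Finset.Icc 1 i, (f j - f (j - 1)) = f i := by
  intro i
  induction i with
  | zero => simp [h0]
  | succ k ih =>
      rw [Finset.sum_Icc_succ_top (Nat.le_add_left 1 k), ih]
      simp [Nat.add_comm 1 k]

/-- Necessary conditions for existence of a feasible robust flow on a pearl digraph
(vertices `v_1, …, v_n` on a path, each consecutive pair joined by at most one fixed
and at most one free arc, at least one of them present): all states
`σ^λ_{v_i} = ∑_{j≤i} b^λ(v_j)` must be nonnegative, and whenever the multi-arc between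
`v_i` and `v_{i+1}` consists of a fixed arc only, the states at `v_i` agree in all
scenarios (hence each equals the minimum over scenarios). -/
theorem stmt_16 (Λ : Type*) (n : ℕ) (hn : 2 ≤ n)
    (hasFix hasFree : ℕ → Prop)
    (hex : ∀ i ∈ Finset.Icc 1 (n - 1), hasFix i ∨ hasFree i)
    (b : Λ → ℕ → ℤ) (hb : ∀ lam, ∑ i ∈ Finset.Icc 1 n, b lam i = 0)
    -- a feasible robust flow: per scenario flows on the fixed and free arcs
    (ffix ffree : Λ → ℕ → ℤ)
    (hnf : ∀ lam i, 0 ≤ ffix lam i ∧ 0 ≤ ffree lam i)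
    (hsupport : ∀ lam i, i ∉ Finset.Icc 1 (n - 1) → ffix lam i = 0 ∧ ffree lam i = 0)
    (habsentFix : ∀ lam i, ¬ hasFix i → ffix lam i = 0)
    (habsentFree : ∀ lam i, ¬ hasFree i → ffree lam i = 0)
    -- flow balance constraints at every vertex
    (hbal : ∀ lam, ∀ i ∈ Finset.Icc 1 n,
      (ffix lam i + ffree lam i) - (ffix lam (i - 1) + ffree lam (i - 1)) = b lam i)
    -- consistent flow constraints on the fixed arcs
    (hcons : ∀ lam mu i, ffix lam i = ffix mu i) :
    (∀ lam, ∀ i ∈ Finset.Icc 1 n, 0 ≤ ∑ j ∈ Finset.Icc 1 i, b lam j) ∧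
    (∀ i ∈ Finset.Icc 1 (n - 1), hasFix i → ¬ hasFree i →
      ∀ lam mu, ∑ j ∈ Finset.Icc 1 i, b lam j = ∑ j ∈ Finset.Icc 1 i, b mu j) := by
  have key : ∀ lam, ∀ i ∈ Finset.Icc 1 n,
      ∑ j ∈ Finset.Icc 1 i, b lam j = ffix lam i + ffree lam i := by
    intro lam i hi
    have hi' : i ≤ n := (Finset.mem_Icc.mp hi).2
    have h0 : ffix lam 0 + ffree lam 0 = 0 := by
      have := hsupport lam 0 (by simp)
      simp [this.1, this.2]
    have := telescope_aux (fun j => ffix lam j + ffree lam j) h0 i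
    rw [← this]
    apply Finset.sum_congr rfl
    intro j hj
    have hj' := Finset.mem_Icc.mp hj
    exact (hbal lam j (Finset.mem_Icc.mpr ⟨hj'.1, hj'.2.trans hi'⟩)).symm
  constructor
  · intro lam i hi
    rw [key lam i hi]
    have := hnf lam i
    linarith [this.1, this.2]
  · intro i hi _ hfree lam mu
    have hi' : i ∈ Finset.Icc 1 n := by
      have := Finset.mem_Icc.mp hi
      exact Finset.mem_Icc.mpr ⟨this.1, this.2.trans (Nat.sub_le n 1)⟩
    rw [key lam i hi', key mu i hi', habsentFree lam i hfree, habsentFree mu i hfree,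
      hcons lam mu i]
end

section
/- Let G be a pearl digraph with vertices v_1,...,v_n, where each consecutive pair is joined by a fixed arc a^fix_i and a free arc a^free_i with costs c(a^fix_i) < c(a^free_i). Given balances b^λ per scenario with nonnegative states σ^λ_{v_i} = ∑_{j≤i} b^λ(v_j), define σ^min_{v_i} = min_λ σ^λ_{v_i}. Then the flow assigning f^λ(a^fix_i) = σ^min_{v_i} and f^λ(a^free_i) = σ^λ_{v_i} − σ^min_{v_i} is a feasible robust flow: each f^λ satisfies flow conservation with balances b^λ, and all scenario flows agree on every fixed arc. -/
/-- Feasibility of the canonical robust flow on a pearl digraph: sending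
`σ^min_{v_i}` units along each fixed arc and `σ^λ_{v_i} − σ^min_{v_i}` units along each
free arc yields a nonnegative flow that satisfies the flow balance constraints with
balances `b^λ` in every scenario and agrees on all fixed arcs across scenarios. -/
theorem stmt_17 (Λ : Type*) [Fintype Λ] [Nonempty Λ] (n : ℕ) (hn : 2 ≤ n)
    (cfix cfree : ℕ → ℤ)
    (hc : ∀ i ∈ Finset.Icc 1 (n - 1), cfix i < cfree i)
    (b : Λ → ℕ → ℤ) (hb : ∀ lam, ∑ i ∈ Finset.Icc 1 n, b lam i = 0)
    (hstate : ∀ lam, ∀ i ∈ Finset.Icc 1 n, 0 ≤ ∑ j ∈ Finset.Icc 1 i, b lam j)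
    (ffix ffree : Λ → ℕ → ℤ)
    (hffix : ∀ lam i, ffix lam i
      = Finset.univ.inf' Finset.univ_nonempty (fun mu => ∑ j ∈ Finset.Icc 1 i, b mu j))
    (hffree : ∀ lam i, ffree lam i
      = (∑ j ∈ Finset.Icc 1 i, b lam j)
        - Finset.univ.inf' Finset.univ_nonempty (fun mu => ∑ j ∈ Finset.Icc 1 i, b mu j)) :
    (∀ lam, ∀ i ∈ Finset.Icc 1 n, 0 ≤ ffix lam i ∧ 0 ≤ ffree lam i) ∧
    (∀ lam, ∀ i ∈ Finset.Icc 1 n,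
      (ffix lam i + ffree lam i) - (ffix lam (i - 1) + ffree lam (i - 1)) = b lam i) ∧
    (∀ lam mu i, ffix lam i = ffix mu i) := by
  refine ⟨?_, ?_, ?_⟩
  · intro lam i hi
    constructor
    · rw [hffix]
      apply Finset.le_inf'
      intro mu _
      exact hstate mu i hi
    · rw [hffree]
      have := Finset.inf'_le (f := fun mu => ∑ j ∈ Finset.Icc 1 i, b mu j)
        (b := lam) (Finset.mem_univ lam)
      omega
  · intro lam i hi
    simp only [Finset.mem_Icc] at hi
    rw [hffix, hffix, hffree, hffree]
    have hsplit : ∑ j ∈ Finset.Icc 1 i, b lam j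
        = (∑ j ∈ Finset.Icc 1 (i-1), b lam j) + b lam i := by
      have : Finset.Icc 1 i = insert i (Finset.Icc 1 (i-1)) := by
        ext x; simp [Finset.mem_Icc]; omega
      rw [this, Finset.sum_insert (by simp; omega)]
      ring
    omega
  · intro lam mu i
    rw [hffix, hffix]
end
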